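/- Let n ≥ 2 and let G = F_n × ℤ be the direct product of the free group of rank n with the infinite cyclic group. Then every finitely generated subgroup H of G is undistorted in G. -/

import Mathlib

/-!
Let `π : F_n × ℤ → F_n` be the projection. The image `π H` is a finitely generated subgroup of
a free group, and these are undistorted: let `T` be the finite set of elements whose reduced word
is a prefix of the reduced word of a generator. Reducing `b * y` for a generator `b` cancels a
suffix of `b` against a prefix of `y`, so by induction every prefix of the reduced word of
`w ∈ π H` lies in `π H * t` for some `t ∈ T`. Telescoping along the prefixes writes `w` as a
product of `|w|` elements of the finite set `π H ∩ T * X * T⁻¹` (`X` the letters). Lifting these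
factors to `H` recovers `h` up to a central element `(1, z)` of `H`, and `z` lies in the cyclic
group `H ∩ ℤ`, with `|z|` linear in `|w|` and in the `ℤ`-coordinate of `h`. Both are at most
linear in the `S`-length of `h`.
-/

/-- The word length of `g` with respect to a generating set `S`: the least `n ≥ 0`
such that `g` is a product of `n` elements of `S ∪ S⁻¹`. -/
noncomputable def wordLength {G : Type*} [Group G] (S : Set G) (g : G) : ℕ :=
  sInf {n : ℕ | ∃ l : List G, (∀ x ∈ l, x ∈ S ∨ x⁻¹ ∈ S) ∧ l.length = n ∧ l.prod = g}

open Subgroup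

section WordLength

variable {G : Type*} [Group G] {S : Set G} {g x y : G}

theorem mem_closure_of_mem_or_inv_mem (hx : x ∈ S ∨ x⁻¹ ∈ S) : x ∈ closure S :=
  hx.elim (fun h => subset_closure h) fun h => by simpa using inv_mem (subset_closure h)

theorem list_prod_mem_closure {l : List G} (hl : ∀ x ∈ l, x ∈ S ∨ x⁻¹ ∈ S) :
    l.prod ∈ closure S :=
  list_prod_mem fun x hx => mem_closure_of_mem_or_inv_mem (hl x hx)

theorem exists_list_prod_eq_of_mem_closure (hg : g ∈ closure S) :
    ∃ l : List G, (∀ x ∈ l, x ∈ S ∨ x⁻¹ ∈ S) ∧ l.prod = g := by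
  induction hg using closure_induction_left with
  | one => exact ⟨[], by simp, rfl⟩
  | mul_left x hx y _ ih =>
    obtain ⟨l, hl, rfl⟩ := ih
    exact ⟨x :: l, by simpa [hx] using hl, rfl⟩
  | inv_mul_cancel x hx y _ ih =>
    obtain ⟨l, hl, rfl⟩ := ih
    exact ⟨x⁻¹ :: l, by simpa [hx] using hl, rfl⟩

theorem wordLength_le_length {l : List G} (hl : ∀ x ∈ l, x ∈ S ∨ x⁻¹ ∈ S) :
    wordLength S l.prod ≤ l.length :=
  Nat.sInf_le ⟨l, hl, rfl, rfl⟩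

theorem exists_list_length_eq_wordLength (hg : g ∈ closure S) :
    ∃ l : List G, (∀ x ∈ l, x ∈ S ∨ x⁻¹ ∈ S) ∧ l.length = wordLength S g ∧ l.prod = g := by
  obtain ⟨l, hl, hlg⟩ := exists_list_prod_eq_of_mem_closure hg
  exact Nat.sInf_mem (s := {n | ∃ l : List G, (∀ x ∈ l, x ∈ S ∨ x⁻¹ ∈ S) ∧ l.length = n ∧
    l.prod = g}) ⟨_, l, hl, rfl, hlg⟩

theorem wordLength_one : wordLength S 1 = 0 :=
  Nat.le_zero.mp (wordLength_le_length (l := []) (by simp))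

theorem wordLength_mul_le (hx : x ∈ closure S) (hy : y ∈ closure S) :
    wordLength S (x * y) ≤ wordLength S x + wordLength S y := by
  obtain ⟨l₁, hl₁, hlen₁, rfl⟩ := exists_list_length_eq_wordLength hx
  obtain ⟨l₂, hl₂, hlen₂, rfl⟩ := exists_list_length_eq_wordLength hy
  rw [← hlen₁, ← hlen₂, ← List.length_append, ← List.prod_append]
  exact wordLength_le_length (List.forall_mem_append.mpr ⟨hl₁, hl₂⟩)

theorem wordLength_zpow_le (hx : x ∈ S) (k : ℤ) : wordLength S (x ^ k) ≤ k.natAbs := by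
  obtain ⟨n, rfl | rfl⟩ := Int.eq_nat_or_neg k
  · simpa using wordLength_le_length (l := List.replicate n x) (by simp [hx])
  · simpa using wordLength_le_length (l := List.replicate n x⁻¹) (by simp [hx])

theorem le_mul_wordLength {ν : G → ℕ} {K : ℕ} (hone : ν 1 = 0)
    (hmul : ∀ x ∈ closure S, ∀ y ∈ closure S, ν (x * y) ≤ ν x + ν y)
    (hK : ∀ x, x ∈ S ∨ x⁻¹ ∈ S → ν x ≤ K) (hg : g ∈ closure S) :
    ν g ≤ K * wordLength S g := by
  obtain ⟨l, hl, hlen, rfl⟩ := exists_list_length_eq_wordLength hg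
  rw [← hlen]
  clear hlen hg
  induction l with
  | nil => simp [hone]
  | cons x l ih =>
    rw [List.forall_mem_cons] at hl
    calc ν (x :: l).prod ≤ ν x + ν l.prod :=
          hmul x (mem_closure_of_mem_or_inv_mem hl.1) _ (list_prod_mem_closure hl.2)
      _ ≤ K + K * l.length := add_le_add (hK x hl.1) (ih hl.2)
      _ = K * (x :: l).length := by simp [mul_add, add_comm]

theorem exists_le_mul_wordLength (hS : S.Finite) {ν : G → ℕ} (hone : ν 1 = 0)
    (hmul : ∀ x ∈ closure S, ∀ y ∈ closure S, ν (x * y) ≤ ν x + ν y) :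
    ∃ K, ∀ g ∈ closure S, ν g ≤ K * wordLength S g := by
  obtain ⟨K, hK⟩ := ((hS.union hS.inv).image ν).bddAbove
  exact ⟨K, fun g hg => le_mul_wordLength hone hmul (fun x hx => hK ⟨x, hx, rfl⟩) hg⟩

theorem exists_wordLength_le_mul {A B : Set G} (hA : A.Finite) (hAB : A ⊆ closure B) :
    ∃ M, ∀ g ∈ closure A, wordLength B g ≤ M * wordLength A g := by
  have hAB' : closure A ≤ closure B := closure_le _ |>.mpr hAB
  exact exists_le_mul_wordLength hA wordLength_one fun x hx y hy =>
    wordLength_mul_le (hAB' hx) (hAB' hy)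

theorem exists_map_eq_wordLength_le {Q : Type*} [Group Q] (f : G →* Q) {E : Set G} {A : Set Q}
    (hAE : A ⊆ f '' E) {w : Q} (hw : w ∈ closure A) :
    ∃ p ∈ closure E, f p = w ∧ wordLength E p ≤ wordLength A w := by
  have hlift : ∀ x : Q, ∃ y : G, (x ∈ A ∨ x⁻¹ ∈ A) → (y ∈ E ∨ y⁻¹ ∈ E) ∧ f y = x := by
    intro x
    by_cases hx : x ∈ A
    · obtain ⟨y, hy, rfl⟩ := hAE hx
      exact ⟨y, fun _ => ⟨Or.inl hy, rfl⟩⟩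
    by_cases hx' : x⁻¹ ∈ A
    · obtain ⟨y, hy, hyx⟩ := hAE hx'
      exact ⟨y⁻¹, fun _ => ⟨Or.inr (by simpa using hy), by simp [hyx]⟩⟩
    exact ⟨1, fun h => (h.elim hx hx').elim⟩
  choose σ hσ using hlift
  obtain ⟨l, hl, hlen, rfl⟩ := exists_list_length_eq_wordLength hw
  have hσl : ∀ y ∈ l.map σ, y ∈ E ∨ y⁻¹ ∈ E := by
    simpa using fun x hx => (hσ x (hl x hx)).1
  refine ⟨(l.map σ).prod, list_prod_mem_closure hσl, ?_, ?_⟩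
  · rw [map_list_prod, List.map_map]
    exact congrArg List.prod (List.map_congr_left fun x hx => (hσ x (hl x hx)).2) |>.trans
      (by simp)
  · simpa [hlen] using wordLength_le_length hσl

end WordLength

namespace FreeGroup

variable {α : Type*} [DecidableEq α]

theorem IsReduced.exists_reduce_append_eq {L₁ L₂ : List (α × Bool)} (h₁ : IsReduced L₁)
    (h₂ : IsReduced L₂) :
    ∃ p c q, L₁ = p ++ c ∧ L₂ = invRev c ++ q ∧ reduce (L₁ ++ L₂) = p ++ q := by
  induction L₁ using List.reverseRecOn generalizing L₂ with
  | nil => exact ⟨[], [], L₂, rfl, by simp [invRev], h₂.reduce_eq⟩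
  | append_singleton l a ih =>
    cases L₂ with
    | nil => exact ⟨l ++ [a], [], [], by simp, by simp [invRev], by simpa using h₁.reduce_eq⟩
    | cons u L₂ =>
      by_cases hu : u = (a.1, !a.2)
      · subst hu
        obtain ⟨p, c, q, rfl, rfl, hpq⟩ :=
          ih (h₁.infix ⟨[], [a], rfl⟩) (L₂ := L₂) (h₂.infix ⟨[(a.1, !a.2)], [], by simp⟩)
        refine ⟨p, c ++ [a], q, by simp, by simp [invRev], ?_⟩
        rw [← hpq, ← reduce.Step.eq (Red.Step.not (L₁ := p ++ c) (x := a.1) (b := a.2))]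
        simp
      · refine ⟨l ++ [a], [], u :: L₂, by simp, by simp [invRev], IsReduced.reduce_eq ?_⟩
        refine List.IsChain.append h₁ h₂ ?_
        simp only [List.getLast?_append, List.getLast?_singleton, Option.some_or,
          Option.mem_def, Option.some.injEq, List.head?_cons, forall_eq']
        intro h
        cases a; cases u
        simp_all

theorem exists_toWord_mul (x y : FreeGroup α) :
    ∃ p c q, x.toWord = p ++ c ∧ y.toWord = invRev c ++ q ∧ (x * y).toWord = p ++ q := by
  rw [toWord_mul]
  exact isReduced_toWord.exists_reduce_append_eq isReduced_toWord

theorem toWord_mk_of_isPrefix {P : List (α × Bool)} {x : FreeGroup α} (hP : P <+: x.toWord) :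
    (mk P).toWord = P := by
  rw [toWord_mk]
  exact (isReduced_toWord.infix hP.isInfix).reduce_eq

theorem isPrefix_toWord_mul {P : List (α × Bool)} {x y : FreeGroup α}
    (hP : P <+: (x * y).toWord) :
    P <+: x.toWord ∨ ∃ Q, Q <+: y.toWord ∧ mk P = x * mk Q := by
  obtain ⟨p, c, q, hx, hy, hxy⟩ := exists_toWord_mul x y
  obtain ⟨r, hr⟩ := hP
  rw [hxy] at hr
  rcases List.append_eq_append_iff.mp hr with ⟨a', rfl, -⟩ | ⟨c', rfl, rfl⟩
  · exact Or.inl (hx ▸ (List.prefix_append _ _).trans (List.prefix_append _ _))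
  · refine Or.inr ⟨invRev c ++ c', hy ▸ by simp, ?_⟩
    rw [← mk_toWord (x := x), hx, ← mul_mk, ← mul_mk, ← mul_mk, ← inv_mk]
    group

def wordPrefixes (s : Set (FreeGroup α)) : Set (FreeGroup α) :=
  {t | ∃ b ∈ insert 1 (s ∪ s⁻¹), t.toWord <+: b.toWord}

theorem one_mem_wordPrefixes (s : Set (FreeGroup α)) : 1 ∈ wordPrefixes s :=
  ⟨1, Set.mem_insert _ _, List.prefix_refl _⟩

theorem wordPrefixes_finite {s : Set (FreeGroup α)} (hs : s.Finite) :
    (wordPrefixes s).Finite := by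
  have : wordPrefixes s = ⋃ b ∈ insert 1 (s ∪ s⁻¹), toWord ⁻¹' {L | L <+: b.toWord} := by
    ext; simp [wordPrefixes]
  rw [this]
  refine ((hs.union hs.inv).insert 1).biUnion fun b _ => .preimage toWord_injective.injOn ?_
  exact b.toWord.inits.finite_toSet.subset fun L hL => (List.mem_inits _ _).mpr hL

theorem exists_mem_wordPrefixes_mul_inv_mem_closure {s : Set (FreeGroup α)} {h : FreeGroup α}
    (hh : h ∈ closure s) {P : List (α × Bool)} (hP : P <+: h.toWord) :
    ∃ t ∈ wordPrefixes s, mk P * t⁻¹ ∈ closure s := by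
  have step : ∀ b, b ∈ s ∨ b⁻¹ ∈ s → ∀ y, (∀ Q, Q <+: y.toWord →
      ∃ t ∈ wordPrefixes s, mk Q * t⁻¹ ∈ closure s) →
      ∀ P, P <+: (b * y).toWord → ∃ t ∈ wordPrefixes s, mk P * t⁻¹ ∈ closure s := by
    intro b hb y ih P hP
    rcases isPrefix_toWord_mul hP with hPb | ⟨Q, hQ, hPQ⟩
    · refine ⟨mk P, ⟨b, Set.mem_insert_of_mem _ hb, ?_⟩, by rw [mul_inv_cancel]; exact one_mem _⟩
      rwa [toWord_mk_of_isPrefix hPb]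
    · obtain ⟨t, ht, hQt⟩ := ih Q hQ
      refine ⟨t, ht, ?_⟩
      rw [hPQ, mul_assoc]
      exact mul_mem (mem_closure_of_mem_or_inv_mem hb) hQt
  induction hh using closure_induction_left generalizing P with
  | one =>
    rw [toWord_one, List.prefix_nil] at hP
    exact ⟨1, one_mem_wordPrefixes s, by simp [hP, ← one_eq_mk, one_mem]⟩
  | mul_left b hb y _ ih => exact step b (Or.inl hb) y (fun Q hQ => ih hQ) P hP
  | inv_mul_cancel b hb y _ ih =>
    exact step b⁻¹ (Or.inr (by simpa using hb)) y (fun Q hQ => ih hQ) P hP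

open Pointwise in
theorem exists_list_length_eq_norm_prod_eq {s : Set (FreeGroup α)} {w : FreeGroup α}
    (hw : w ∈ closure s) :
    ∃ l : List (FreeGroup α), (∀ a ∈ l, a ∈ (closure s : Set (FreeGroup α)) ∩
        (wordPrefixes s * Set.range (fun x => mk [x]) * (wordPrefixes s)⁻¹)) ∧
      l.length = w.norm ∧ l.prod = w := by
  set L := w.toWord.length
  -- `t 0 = t L = 1` makes the telescoping product below equal to `w`.
  have hprefix : ∀ i, ∃ t ∈ wordPrefixes s, mk (w.toWord.take i) * t⁻¹ ∈ closure s ∧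
      (i = 0 ∨ L ≤ i → t = 1) := by
    intro i
    by_cases hi : i = 0 ∨ L ≤ i
    · refine ⟨1, one_mem_wordPrefixes s, ?_, fun _ => rfl⟩
      rcases hi with rfl | hi
      · simp [← one_eq_mk, one_mem]
      · simpa [List.take_of_length_le hi, mk_toWord] using hw
    · obtain ⟨t, ht, hmem⟩ :=
        exists_mem_wordPrefixes_mul_inv_mem_closure hw (List.take_prefix i _)
      exact ⟨t, ht, hmem, fun h => absurd h hi⟩
  choose t ht hmem ht1 using hprefix
  let f : ℕ → FreeGroup α := fun i => t i * (mk (w.toWord.take i))⁻¹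
  refine ⟨(List.range L).map fun i => f i / f (i + 1), ?_, by simp [L, norm], ?_⟩
  · simp only [List.mem_map, List.mem_range]
    rintro _ ⟨i, hi, rfl⟩
    refine ⟨?_, ?_⟩
    · have : f i / f (i + 1) = (mk (w.toWord.take i) * (t i)⁻¹)⁻¹ *
          (mk (w.toWord.take (i + 1)) * (t (i + 1))⁻¹) := by
        simp only [f, div_eq_mul_inv]; group
      rw [this]
      exact mul_mem (inv_mem (hmem i)) (hmem (i + 1))
    · have htake : mk (w.toWord.take (i + 1)) = mk (w.toWord.take i) * mk [w.toWord[i]] := by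
        rw [mul_mk, List.take_add_one, List.getElem?_eq_getElem hi]
        rfl
      have : f i / f (i + 1) = t i * mk [w.toWord[i]] * (t (i + 1))⁻¹ := by
        simp only [f, htake, div_eq_mul_inv]; group
      rw [this]
      exact Set.mul_mem_mul (Set.mul_mem_mul (ht i) ⟨_, rfl⟩) (Set.inv_mem_inv.mpr (ht (i + 1)))
  · rw [List.prod_range_div']
    simp [f, ht1 0 (Or.inl rfl), ht1 L (Or.inr le_rfl), L, ← one_eq_mk, mk_toWord]

open Pointwise in
theorem exists_finite_closure_eq_wordLength_le_norm [Finite α] {s : Set (FreeGroup α)}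
    (hs : s.Finite) :
    ∃ A : Set (FreeGroup α), A.Finite ∧ closure A = closure s ∧
      ∀ w ∈ closure s, wordLength A w ≤ w.norm := by
  have hA : ((closure s : Set (FreeGroup α)) ∩
      (wordPrefixes s * Set.range (fun x => mk [x]) * (wordPrefixes s)⁻¹)).Finite :=
    Set.Finite.inter_of_right
      (((wordPrefixes_finite hs).mul (Set.finite_range _)).mul (wordPrefixes_finite hs).inv) _
  refine ⟨_, hA, le_antisymm ((closure_le _).mpr fun a ha => ha.1) fun w hw => ?_,
    fun w hw => ?_⟩ <;>
  obtain ⟨l, hl, hlen, rfl⟩ := exists_list_length_eq_norm_prod_eq hw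
  · exact list_prod_mem_closure fun a ha => Or.inl (hl a ha)
  · exact hlen ▸ wordLength_le_length fun a ha => Or.inl (hl a ha)

end FreeGroup

section ProdInt

variable {F : Type*} [Group F]

theorem Subgroup.exists_one_ofAdd_mem_iff_dvd (H : Subgroup (F × Multiplicative ℤ)) :
    ∃ m : ℤ, ∀ z : ℤ, ((1 : F), Multiplicative.ofAdd z) ∈ H ↔ m ∣ z := by
  obtain ⟨m, hm⟩ :=
    Int.subgroup_cyclic (H.comap (MonoidHom.inr F (Multiplicative ℤ))).toAddSubgroup'
  refine ⟨m, fun z => ?_⟩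
  rw [← Int.mem_zmultiples_iff, AddSubgroup.zmultiples_eq_closure, ← hm]
  rfl

theorem exists_eq_zpow_mul_of_fst_eq {H : Subgroup (F × Multiplicative ℤ)} {m : ℤ}
    (hm : ∀ z : ℤ, ((1 : F), Multiplicative.ofAdd z) ∈ H ↔ m ∣ z) {h p : F × Multiplicative ℤ}
    (hh : h ∈ H) (hp : p ∈ H) (hhp : h.1 = p.1) :
    ∃ k : ℤ, h = ((1 : F), Multiplicative.ofAdd m) ^ k * p ∧
      k.natAbs ≤ (Multiplicative.toAdd h.2).natAbs + (Multiplicative.toAdd p.2).natAbs := by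
  set d := Multiplicative.toAdd h.2 - Multiplicative.toAdd p.2
  have hd : ((1 : F), Multiplicative.ofAdd d) = h * p⁻¹ :=
    Prod.ext (by simp [hhp]) (by simp [d, div_eq_mul_inv])
  obtain ⟨k, hdk, hk⟩ : ∃ k, d = m * k ∧ k.natAbs ≤ d.natAbs := by
    obtain ⟨k, hk⟩ := (hm d).mp (hd ▸ mul_mem hh (inv_mem hp))
    by_cases hd0 : d = 0
    · exact ⟨0, by simp [hd0], by simp⟩
    · exact ⟨k, hk, Int.natAbs_le_of_dvd_ne_zero (Dvd.intro_left m hk.symm) hd0⟩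
  refine ⟨k, Prod.ext (by simp [hhp]) ?_, hk.trans (Int.natAbs_sub_le _ _)⟩
  apply Multiplicative.toAdd.injective
  simp only [Prod.snd_mul, Prod.pow_snd, toAdd_mul, toAdd_zpow, toAdd_ofAdd, smul_eq_mul]
  linarith [mul_comm m k]

theorem exists_wordLength_le_of_closure_eq_map_fst {H : Subgroup (F × Multiplicative ℤ)}
    {A : Set F} (hA : A.Finite) (hAH : closure A = H.map (MonoidHom.fst F (Multiplicative ℤ))) :
    ∃ E : Set (F × Multiplicative ℤ), E.Finite ∧ closure E = H ∧ ∃ C : ℕ, ∀ h ∈ H,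
      wordLength E h ≤ C * (wordLength A h.1 + (Multiplicative.toAdd h.2).natAbs) := by
  obtain ⟨E₀, hE₀H, hE₀, hAE₀⟩ : ∃ E₀ ⊆ (H : Set (F × Multiplicative ℤ)), E₀.Finite ∧
      A ⊆ Prod.fst '' E₀ := by
    have hAH' : A ⊆ Prod.fst '' (H : Set (F × Multiplicative ℤ)) := by
      rw [← MonoidHom.coe_fst, ← coe_map, ← hAH]
      exact subset_closure
    exact Set.exists_subset_image_finite_and.mp ⟨A, hAH', hA, subset_rfl⟩
  obtain ⟨m, hm⟩ := H.exists_one_ofAdd_mem_iff_dvd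
  set e : F × Multiplicative ℤ := (1, Multiplicative.ofAdd m)
  set E := insert e E₀
  have hEH : closure E ≤ H := (closure_le H).mpr (Set.insert_subset ((hm m).mpr dvd_rfl) hE₀H)
  obtain ⟨Z, hZ⟩ := exists_le_mul_wordLength (hE₀.insert e)
    (ν := fun x => (Multiplicative.toAdd x.2).natAbs) (by simp)
    fun x _ y _ => Int.natAbs_add_le _ _
  have key : ∀ h ∈ H, h ∈ closure E ∧
      wordLength E h ≤ (Z + 1) * (wordLength A h.1 + (Multiplicative.toAdd h.2).natAbs) := by
    intro h hh
    have h1 : h.1 ∈ closure A := hAH ▸ mem_map_of_mem _ hh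
    obtain ⟨p, hpE, hp1, hpA⟩ := exists_map_eq_wordLength_le (MonoidHom.fst _ _)
      (E := E) (hAE₀.trans (Set.image_mono (Set.subset_insert e E₀))) h1
    obtain ⟨k, hhk, hk⟩ := exists_eq_zpow_mul_of_fst_eq hm hh (hEH hpE) hp1.symm
    have heE : e ^ k ∈ closure E := zpow_mem (subset_closure (Set.mem_insert e E₀)) k
    refine ⟨hhk ▸ mul_mem heE hpE, ?_⟩
    have hp2 : (Multiplicative.toAdd p.2).natAbs ≤ Z * wordLength E p := hZ p hpE
    have hZA := Nat.mul_le_mul_left Z hpA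
    calc wordLength E h = wordLength E (e ^ k * p) := congrArg _ hhk
      _ ≤ k.natAbs + wordLength E p := (wordLength_mul_le heE hpE).trans
          (Nat.add_le_add_right (wordLength_zpow_le (Set.mem_insert e E₀) k) _)
      _ ≤ (Z + 1) * (wordLength A h.1 + (Multiplicative.toAdd h.2).natAbs) := by
          rw [add_one_mul, mul_add]; omega
  exact ⟨E, hE₀.insert e, le_antisymm hEH fun h hh => (key h hh).1, Z + 1,
    fun h hh => (key h hh).2⟩

end ProdInt

theorem freeGroup_prod_int_subgroups_undistorted_general (n : ℕ)
    (H : Subgroup (FreeGroup (Fin n) × Multiplicative ℤ))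
    (S : Finset (FreeGroup (Fin n) × Multiplicative ℤ))
    (hS : Subgroup.closure (S : Set (FreeGroup (Fin n) × Multiplicative ℤ)) = ⊤)
    (B : Finset (FreeGroup (Fin n) × Multiplicative ℤ))
    (hB : Subgroup.closure (B : Set (FreeGroup (Fin n) × Multiplicative ℤ)) = H) :
    ∃ C : ℕ, 0 < C ∧ ∀ h ∈ H,
      wordLength (B : Set (FreeGroup (Fin n) × Multiplicative ℤ)) h ≤
        C * wordLength (S : Set (FreeGroup (Fin n) × Multiplicative ℤ)) h + C := by
  obtain ⟨A, hA, hAB, hAnorm⟩ :=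
    FreeGroup.exists_finite_closure_eq_wordLength_le_norm (B.finite_toSet.image Prod.fst)
  have hAH : closure A = H.map (MonoidHom.fst _ _) := by
    rw [hAB, ← hB, MonoidHom.map_closure, MonoidHom.coe_fst]
  obtain ⟨E, hE, hEH, C, hC⟩ := exists_wordLength_le_of_closure_eq_map_fst hA hAH
  obtain ⟨M, hM⟩ :=
    exists_wordLength_le_mul hE (by rw [hB, ← hEH]; exact Subgroup.subset_closure)
  obtain ⟨K, hK⟩ := exists_le_mul_wordLength S.finite_toSet
    (ν := fun x => x.1.norm + (Multiplicative.toAdd x.2).natAbs) (by simp)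
    fun x _ y _ => by
      have := FreeGroup.norm_mul_le x.1 y.1
      have := Int.natAbs_add_le (Multiplicative.toAdd x.2) (Multiplicative.toAdd y.2)
      simp only [Prod.fst_mul, Prod.snd_mul, toAdd_mul]
      omega
  refine ⟨M * C * K + 1, Nat.succ_pos _, fun h hh => ?_⟩
  have hh₁ : h.1 ∈ closure (Prod.fst '' (B : Set (FreeGroup (Fin n) × Multiplicative ℤ))) := by
    rw [← hAB, hAH]; exact mem_map_of_mem _ hh
  calc wordLength B h ≤ M * wordLength E h := hM h (hEH ▸ hh)
    _ ≤ M * (C * (h.1.norm + (Multiplicative.toAdd h.2).natAbs)) := by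
      gcongr; exact (hC h hh).trans (by gcongr; exact hAnorm _ hh₁)
    _ ≤ M * (C * (K * wordLength S h)) := by gcongr; exact hK h (hS ▸ mem_top h)
    _ ≤ (M * C * K + 1) * wordLength S h + (M * C * K + 1) := by
      rw [← mul_assoc, ← mul_assoc, add_one_mul]; omega

/-- For `n ≥ 2`, every finitely generated subgroup `H` of
`G = F_n × ℤ` (the direct product of the free group of rank `n` with the infinite
cyclic group) is undistorted in `G`. -/
theorem freeGroup_prod_int_subgroups_undistorted (n : ℕ) (hn : 2 ≤ n)
    (H : Subgroup (FreeGroup (Fin n) × Multiplicative ℤ)) (hfg : H.FG)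
    (S : Finset (FreeGroup (Fin n) × Multiplicative ℤ))
    (hS : Subgroup.closure (S : Set (FreeGroup (Fin n) × Multiplicative ℤ)) = ⊤)
    (B : Finset (FreeGroup (Fin n) × Multiplicative ℤ))
    (hB : Subgroup.closure (B : Set (FreeGroup (Fin n) × Multiplicative ℤ)) = H) :
    ∃ C : ℕ, 0 < C ∧ ∀ h ∈ H,
      wordLength (B : Set (FreeGroup (Fin n) × Multiplicative ℤ)) h ≤
        C * wordLength (S : Set (FreeGroup (Fin n) × Multiplicative ℤ)) h + C :=
  freeGroup_prod_int_subgroups_undistorted_general n H S hS B hB
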